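/- The series G defined by 1 + G = ∑_{n=0}^∞ ((pq;q)_n/(q²;q)_n)·q^n converges, and with h_0 = q·(1−p)/(1−pq) and M_0 = q·(p;q)_∞/((1−pq)·((pq;q)_∞ − (q;q)_∞)) one has h_0 + (1−h_0)/(1+G) = M_0; equivalently, ∑_{n=0}^∞ ((pq;q)_n/(q²;q)_n)·q^n = (1−h_0)/(M_0 − h_0). -/

import Mathlib

/-!
With `r n = (a;q)_n / (q;q)_n` one has `(q - a) (a;q)_n / (q²;q)_n q^n = (1 - q) (r (n+1) - r n)`,
so for `a = pq` the series telescopes to `(1 - q) ((pq;q)_∞ / (q;q)_∞ - 1) / (q - pq)`.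
The sum is at least its first term `1`, so `(pq;q)_∞ > (q;q)_∞` and no denominator vanishes;
since `(p;q)_∞ = (1 - p) (pq;q)_∞`, both identities are then rational identities in
`(pq;q)_∞` and `(q;q)_∞`.
-/

/-- Finite q-shifted factorial `(z;q)_n`. -/
noncomputable def qp (z q : ℝ) (n : ℕ) : ℝ := ∏ k ∈ Finset.range n, (1 - z * q ^ k)

/-- Infinite q-shifted factorial `(z;q)_∞`. -/
noncomputable def qpInf (z q : ℝ) : ℝ := ∏' k : ℕ, (1 - z * q ^ k)

open Filter Finset Topology

section QPochhammer

variable {z q : ℝ}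

lemma one_sub_mul_pow_pos (hz : z < 1) (hq0 : 0 ≤ q) (hq1 : q ≤ 1) (k : ℕ) :
    0 < 1 - z * q ^ k := by
  have h0 : 0 ≤ q ^ k := pow_nonneg hq0 k
  have h1 : q ^ k ≤ 1 := pow_le_one₀ hq0 hq1
  rcases le_total 0 z with hz0 | hz0 <;> nlinarith

lemma qp_pos (hz : z < 1) (hq0 : 0 ≤ q) (hq1 : q ≤ 1) (n : ℕ) : 0 < qp z q n :=
  prod_pos fun k _ => one_sub_mul_pow_pos hz hq0 hq1 k

lemma qp_succ (z q : ℝ) (n : ℕ) : qp z q (n + 1) = qp z q n * (1 - z * q ^ n) :=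
  prod_range_succ _ _

lemma qp_succ_eq_one_sub_mul (z q : ℝ) (n : ℕ) :
    qp z q (n + 1) = (1 - z) * qp (z * q) q n := by
  rw [qp, prod_range_succ', mul_comm, qp]
  simp only [pow_zero, mul_one, pow_succ, mul_assoc, mul_comm q]

lemma summable_log_one_sub_mul_pow (z : ℝ) (hq0 : 0 ≤ q) (hq1 : q < 1) :
    Summable fun k : ℕ => Real.log (1 - z * q ^ k) := by
  simpa [sub_eq_add_neg] using Real.summable_log_one_add_of_summable
    ((summable_geometric_of_lt_one hq0 hq1).mul_left z).neg

lemma hasProd_qpInf (hz : z < 1) (hq0 : 0 ≤ q) (hq1 : q < 1) :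
    HasProd (fun k : ℕ => 1 - z * q ^ k) (qpInf z q) :=
  (Real.multipliable_of_summable_log (one_sub_mul_pow_pos hz hq0 hq1.le)
    (summable_log_one_sub_mul_pow z hq0 hq1)).hasProd

lemma tendsto_qp (hz : z < 1) (hq0 : 0 ≤ q) (hq1 : q < 1) :
    Tendsto (qp z q) atTop (𝓝 (qpInf z q)) :=
  (hasProd_qpInf hz hq0 hq1).tendsto_prod_nat

lemma qpInf_pos (hz : z < 1) (hq0 : 0 ≤ q) (hq1 : q < 1) : 0 < qpInf z q := by
  rw [qpInf, ← Real.rexp_tsum_eq_tprod (one_sub_mul_pow_pos hz hq0 hq1.le)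
    (summable_log_one_sub_mul_pow z hq0 hq1)]
  exact Real.exp_pos _

lemma qpInf_eq_one_sub_mul (hz : z < 1) (hq0 : 0 ≤ q) (hq1 : q < 1) :
    qpInf z q = (1 - z) * qpInf (z * q) q := by
  have hzq : z * q < 1 := by
    rcases le_total 0 z with hz0 | hz0 <;> nlinarith
  have hshift : (fun k : ℕ => 1 - z * q ^ (k + 1)) = fun k => 1 - z * q * q ^ k := by
    ext k; ring
  rw [qpInf, tprod_eq_zero_mul', hshift, ← qpInf]
  · simp
  · rw [hshift]; exact (hasProd_qpInf hzq hq0 hq1).multipliable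

end QPochhammer

section Telescoping

variable {a q : ℝ}

lemma sub_mul_qp_div_qp_sq_eq (hq0 : 0 ≤ q) (hq1 : q < 1) (n : ℕ) :
    (q - a) * (qp a q n / qp (q ^ 2) q n * q ^ n) =
      (1 - q) * (qp a q (n + 1) / qp q q (n + 1) - qp a q n / qp q q n) := by
  have hQ : qp q q n ≠ 0 := (qp_pos hq1 hq0 hq1.le n).ne'
  have hfac : 1 - q * q ^ n ≠ 0 := (one_sub_mul_pow_pos hq1 hq0 hq1.le n).ne'
  have h1q : 1 - q ≠ 0 := by linarith
  have hq2 : qp (q ^ 2) q n = qp q q n * (1 - q * q ^ n) / (1 - q) := by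
    rw [← qp_succ, qp_succ_eq_one_sub_mul, sq]; field_simp
  rw [hq2, qp_succ, qp_succ]
  field_simp
  ring

lemma qp_div_qp_sq_mul_pow_nonneg (ha : a < 1) (hq0 : 0 ≤ q) (hq1 : q < 1) (n : ℕ) :
    0 ≤ qp a q n / qp (q ^ 2) q n * q ^ n :=
  mul_nonneg (div_nonneg (qp_pos ha hq0 hq1.le n).le
    (qp_pos (by nlinarith) hq0 hq1.le n).le) (pow_nonneg hq0 n)

lemma hasSum_qp_div_qp_sq (ha : a < 1) (hq0 : 0 ≤ q) (hq1 : q < 1) (haq : a ≠ q) :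
    HasSum (fun n => qp a q n / qp (q ^ 2) q n * q ^ n)
      ((1 - q) * (qpInf a q / qpInf q q - 1) / (q - a)) := by
  have hqa : q - a ≠ 0 := sub_ne_zero.2 haq.symm
  have hterm : ∀ n, qp a q n / qp (q ^ 2) q n * q ^ n =
      (1 - q) * (qp a q (n + 1) / qp q q (n + 1) - qp a q n / qp q q n) / (q - a) := by
    intro n
    rw [← sub_mul_qp_div_qp_sq_eq hq0 hq1 n]
    field_simp
  have hratio : Tendsto (fun n => qp a q n / qp q q n) atTop (𝓝 (qpInf a q / qpInf q q)) :=
    (tendsto_qp ha hq0 hq1).div (tendsto_qp hq1 hq0 hq1) (qpInf_pos hq1 hq0 hq1).ne'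
  rw [hasSum_iff_tendsto_nat_of_nonneg (qp_div_qp_sq_mul_pow_nonneg ha hq0 hq1)]
  simp_rw [hterm, ← sum_div, ← mul_sum, sum_range_sub (fun n => qp a q n / qp q q n)]
  simpa [qp] using ((hratio.sub_const 1).const_mul (1 - q)).div_const (q - a)

lemma qpInf_lt_qpInf_mul {p q : ℝ} (hp1 : p < 1) (hq0 : 0 < q) (hq1 : q < 1) :
    qpInf q q < qpInf (p * q) q := by
  have hpq : p * q < q := by nlinarith
  have hS := hasSum_qp_div_qp_sq (by linarith) hq0.le hq1 hpq.ne
  have hS1 := le_hasSum hS 0 fun n _ => qp_div_qp_sq_mul_pow_nonneg (by linarith) hq0.le hq1 n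
  simp only [qp, range_zero, prod_empty, div_one, pow_zero, mul_one] at hS1
  have hQ := qpInf_pos hq1 hq0.le hq1
  by_contra! h
  have hratio : qpInf (p * q) q / qpInf q q - 1 ≤ 0 := by
    rw [div_sub_one hQ.ne']
    exact div_nonpos_of_nonpos_of_nonneg (by linarith) hQ.le
  have := div_nonpos_of_nonpos_of_nonneg
    (mul_nonpos_of_nonneg_of_nonpos (sub_nonneg.2 hq1.le) hratio) (sub_nonneg.2 hpq.le)
  linarith

end Telescoping

theorem stmt_17_general (p q : ℝ) (hp1 : p < 1) (hq0 : 0 < q) (hq1 : q < 1) :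
    Summable (fun n : ℕ => qp (p * q) q n / qp (q ^ 2) q n * q ^ n) ∧
    (q * (1 - p) / (1 - p * q)) +
        (1 - q * (1 - p) / (1 - p * q)) /
          (∑' n : ℕ, qp (p * q) q n / qp (q ^ 2) q n * q ^ n)
      = q * qpInf p q / ((1 - p * q) * (qpInf (p * q) q - qpInf q q)) ∧
    (∑' n : ℕ, qp (p * q) q n / qp (q ^ 2) q n * q ^ n)
      = (1 - q * (1 - p) / (1 - p * q)) /
          (q * qpInf p q / ((1 - p * q) * (qpInf (p * q) q - qpInf q q)) -
            q * (1 - p) / (1 - p * q)) := by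
  have hpq : p * q < q := by nlinarith
  have hS := hasSum_qp_div_qp_sq (by linarith) hq0.le hq1 hpq.ne
  have hAQ := sub_pos.2 (qpInf_lt_qpInf_mul hp1 hq0 hq1)
  have hQ := qpInf_pos hq1 hq0.le hq1
  rw [hS.tsum_eq, qpInf_eq_one_sub_mul hp1 hq0.le hq1]
  generalize qpInf (p * q) q = A, qpInf q q = Q at *
  have h1pq : 1 - p * q ≠ 0 := by linarith
  have h1h0 : 1 - q * (1 - p) / (1 - p * q) ≠ 0 := by
    rw [one_sub_div h1pq]
    exact div_ne_zero (by linarith) h1pq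
  have hM : q * (1 - p) / (1 - p * q) + (1 - q * (1 - p) / (1 - p * q)) /
      ((1 - q) * (A / Q - 1) / (q - p * q)) = q * ((1 - p) * A) / ((1 - p * q) * (A - Q)) := by
    have h1qp : 1 - q * p ≠ 0 := by linarith
    have h1q : 1 - q ≠ 0 := by linarith
    rw [div_sub_one hQ.ne']
    field_simp
    ring
  refine ⟨hS.summable, hM, ?_⟩
  rw [← hM, add_sub_cancel_left, div_div_cancel₀ h1h0]

theorem stmt_17 (p q : ℝ) (hp0 : 0 ≤ p) (hp1 : p < 1) (hq0 : 0 < q) (hq1 : q < 1) :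
    Summable (fun n : ℕ => qp (p * q) q n / qp (q ^ 2) q n * q ^ n) ∧
    (q * (1 - p) / (1 - p * q)) +
        (1 - q * (1 - p) / (1 - p * q)) /
          (∑' n : ℕ, qp (p * q) q n / qp (q ^ 2) q n * q ^ n)
      = q * qpInf p q / ((1 - p * q) * (qpInf (p * q) q - qpInf q q)) ∧
    (∑' n : ℕ, qp (p * q) q n / qp (q ^ 2) q n * q ^ n)
      = (1 - q * (1 - p) / (1 - p * q)) /
          (q * qpInf p q / ((1 - p * q) * (qpInf (p * q) q - qpInf q q)) -
            q * (1 - p) / (1 - p * q)) :=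
  stmt_17_general p q hp1 hq0 hq1
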